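/- arXiv:math/0503414 — 3 statements merged into one kernel-verified Lean document; each statement's English description precedes it below -/
import Mathlib

section
/- Let A = s⁻¹ · [[s², -(s⁴+s²+1)], [0, -1]] and B = s⁻¹·[[s²,0],[1,-1]] be 2×2 matrices over ℤ[s, s⁻¹]. Then the relation ω₁ω₂ω₃²ω₂ω₁ = 1 holds projectively, i.e., the product A·B·A²·B·A is a scalar multiple of the identity matrix. -/
open LaurentPolynomial

theorem stmt_3 :
    let s : LaurentPolynomial ℤ := T 1
    let A : Matrix (Fin 2) (Fin 2) (LaurentPolynomial ℤ) :=
      (T (-1) : LaurentPolynomial ℤ) • !![s ^ 2, -(s ^ 4 + s ^ 2 + 1); 0, -1]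
    let B : Matrix (Fin 2) (Fin 2) (LaurentPolynomial ℤ) :=
      (T (-1) : LaurentPolynomial ℤ) • !![s ^ 2, 0; 1, -1]
    A * A = A * A ∧
      ∃ c : (LaurentPolynomial ℤ)ˣ,
        A * B * A ^ 2 * B * A = (c : LaurentPolynomial ℤ) • (1 : Matrix (Fin 2) (Fin 2) (LaurentPolynomial ℤ)) := by
  intro s A B
  refine ⟨rfl, 1, ?_⟩
  have hA : A = (T (-1) : LaurentPolynomial ℤ) • !![s ^ 2, -(s ^ 4 + s ^ 2 + 1); 0, -1] := rfl
  have hB : B = (T (-1) : LaurentPolynomial ℤ) • !![s ^ 2, 0; 1, -1] := rfl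
  have key : (!![s ^ 2, -(s ^ 4 + s ^ 2 + 1); 0, -1] * !![s ^ 2, 0; 1, -1] *
      (!![s ^ 2, -(s ^ 4 + s ^ 2 + 1); 0, -1] * !![s ^ 2, -(s ^ 4 + s ^ 2 + 1); 0, -1]) *
      !![s ^ 2, 0; 1, -1] * !![s ^ 2, -(s ^ 4 + s ^ 2 + 1); 0, -1]
        : Matrix (Fin 2) (Fin 2) (LaurentPolynomial ℤ)) = s ^ 6 • 1 := by
    rw [Matrix.one_fin_two]
    simp only [Matrix.mul_fin_two, Matrix.smul_of, Matrix.smul_cons, smul_eq_mul,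
      Matrix.smul_empty]
    refine Matrix.ext fun i j => ?_
    fin_cases i <;> fin_cases j <;>
      simp only [Matrix.cons_val', Matrix.cons_val_zero, Matrix.cons_val_one,
        Matrix.head_cons, Matrix.empty_val', Matrix.cons_val_fin_one, Matrix.of_apply] <;>
      ring
  have hs6 : (T (-1) : LaurentPolynomial ℤ) ^ 6 * s ^ 6 = 1 := by
    rw [show s = T 1 from rfl, T_pow, T_pow, ← T_add]
    norm_num [T_zero]
  show A * B * A ^ 2 * B * A = _
  rw [show A ^ 2 = A * A from pow_two A, hA, hB]
  simp only [Matrix.smul_mul, Matrix.mul_smul, smul_smul]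
  rw [key, smul_smul, Units.val_one]
  have h1 : (T (-1) : LaurentPolynomial ℤ) * (T (-1) * (T (-1) * T (-1) * (T (-1) * T (-1)))) *
      s ^ 6 = 1 := by rw [← hs6]; ring
  rw [h1]
end

section
/- Let H₁ = [[1, -A⁴],[0, -A⁴]] and H₂ = [[-A⁴, 0],[-1, 1]] be matrices over ℤ[A, A⁻¹]. Then H₁H₂H₁ = H₂H₁H₂. -/
open LaurentPolynomial

theorem Matrix.braid_fin_two {R : Type*} [CommRing R] (t : R) :
    !![1, -t; 0, -t] * !![-t, 0; -1, 1] * !![1, -t; 0, -t] =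
      !![-t, 0; -1, 1] * !![1, -t; 0, -t] * (!![-t, 0; -1, 1] : Matrix (Fin 2) (Fin 2) R) := by
  simp only [Matrix.mul_fin_two]
  ring_nf

theorem stmt_12 :
    let a : LaurentPolynomial ℤ := T 1
    let H₁ : Matrix (Fin 2) (Fin 2) (LaurentPolynomial ℤ) :=
      !![1, -(a ^ 4); 0, -(a ^ 4)]
    let H₂ : Matrix (Fin 2) (Fin 2) (LaurentPolynomial ℤ) :=
      !![-(a ^ 4), 0; -1, 1]
    H₁ * H₂ * H₁ = H₂ * H₁ * H₂ :=
  Matrix.braid_fin_two _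
end

section
/- With H₁ = [[1, -A⁴],[0, -A⁴]] and H₂ = [[-A⁴, 0],[-1, 1]] over ℤ[A, A⁻¹], the rescaled matrices G₁ = A⁻²H₁ and G₂ = A⁻²H₂ satisfy det(Gᵢ) = -1 and (G₁G₂)³ = I (up to the sphere relation): verify that G₁G₂G₁²G₂G₁ = I and (G₁G₂G₁)⁴ = I, where we use ρ(ω₁)=ρ(ω₃)=G₁, ρ(ω₂)=G₂. -/
/-!
Write `Gᵢ = s • Hᵢ` with `s = A⁻²` and `q = A⁴`, so that `s² q = 1`. Then `G₁ G₂ G₁` is `s³` times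
the antidiagonal matrix with entries `q²` and `q`, whose square is `(s² q)³ = 1` times the identity.
Both relations are powers of `G₁ G₂ G₁`: the sphere relation `G₁ G₂ G₁² G₂ G₁` is its square and
the other relation its fourth power.
-/

open LaurentPolynomial

namespace ZeroFourMatrices

variable {R : Type*} [CommRing R]

def g₁ (s q : R) : Matrix (Fin 2) (Fin 2) R := s • !![1, -q; 0, -q]

def g₂ (s q : R) : Matrix (Fin 2) (Fin 2) R := s • !![-q, 0; -1, 1]

theorem det_g₁ {s q : R} (h : s ^ 2 * q = 1) : (g₁ s q).det = -1 := by
  rw [g₁, Matrix.det_smul, Matrix.det_fin_two_of, Fintype.card_fin]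
  linear_combination -h

theorem det_g₂ {s q : R} (h : s ^ 2 * q = 1) : (g₂ s q).det = -1 := by
  rw [g₂, Matrix.det_smul, Matrix.det_fin_two_of, Fintype.card_fin]
  linear_combination -h

theorem g₁_mul_g₂_mul_g₁ (s q : R) : g₁ s q * g₂ s q * g₁ s q = s ^ 3 • !![0, q ^ 2; q, 0] := by
  simp only [g₁, g₂, Matrix.smul_mul, Matrix.mul_smul, smul_smul, Matrix.mul_fin_two]
  ext i j
  fin_cases i <;> fin_cases j <;> simp <;> ring

theorem smul_antidiag_sq (c b d : R) : (c • !![0, b; d, 0]) ^ 2 = (c ^ 2 * b * d) • 1 := by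
  rw [sq, Matrix.smul_mul, Matrix.mul_smul, smul_smul, Matrix.mul_fin_two, Matrix.one_fin_two]
  ext i j
  fin_cases i <;> fin_cases j <;> simp <;> ring

theorem g₁_mul_g₂_mul_g₁_sq {s q : R} (h : s ^ 2 * q = 1) :
    (g₁ s q * g₂ s q * g₁ s q) ^ 2 = 1 := by
  rw [g₁_mul_g₂_mul_g₁, smul_antidiag_sq,
    show (s ^ 3) ^ 2 * q ^ 2 * q = (s ^ 2 * q) ^ 3 by ring, h, one_pow, one_smul]

end ZeroFourMatrices

open ZeroFourMatrices in
theorem stmt_13 :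
    let a : LaurentPolynomial ℤ := T 1
    let G₁ : Matrix (Fin 2) (Fin 2) (LaurentPolynomial ℤ) :=
      (T (-2) : LaurentPolynomial ℤ) • !![1, -(a ^ 4); 0, -(a ^ 4)]
    let G₂ : Matrix (Fin 2) (Fin 2) (LaurentPolynomial ℤ) :=
      (T (-2) : LaurentPolynomial ℤ) • !![-(a ^ 4), 0; -1, 1]
    G₁.det = -1 ∧ G₂.det = -1 ∧
      G₁ * G₂ * G₁ ^ 2 * G₂ * G₁ = 1 ∧ (G₁ * G₂ * G₁) ^ 4 = 1 := by
  intro a G₁ G₂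
  have hsq : (T (-2) : LaurentPolynomial ℤ) ^ 2 * a ^ 4 = 1 := by
    simp only [a, T_pow, ← T_add]
    norm_num
  have hM : (G₁ * G₂ * G₁) ^ 2 = 1 := g₁_mul_g₂_mul_g₁_sq hsq
  refine ⟨det_g₁ hsq, det_g₂ hsq, ?_, ?_⟩
  · calc G₁ * G₂ * G₁ ^ 2 * G₂ * G₁ = (G₁ * G₂ * G₁) ^ 2 := by noncomm_ring
      _ = 1 := hM
  · rw [show 4 = 2 * 2 from rfl, pow_mul, hM, one_pow]
end
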